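/- Suppose λ ⋖ μ ⋖ ν and λ ⋖ ρ ⋖ ν are two paths of length 2 in the Young graph with μ ≠ ρ. Then, writing r = c(ν/μ) - c(μ/λ), one has r ≠ ±1 and r²/((r - 1)(r + 1)) · p↑(λ,ρ) = p↑(μ,ν). -/
import Mathlib


open Finset

namespace YG

/-- `Covers μ l` : the Young diagram `l` is obtained from `μ` by adding one box. -/
def Covers (μ l : YoungDiagram) : Prop := μ ≤ l ∧ l.card = μ.card + 1

/-- The content `j - i` of a cell `(i, j)`. -/
def content (c : ℕ × ℕ) : ℤ := (c.2 : ℤ) - (c.1 : ℤ)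

/-- The content of the unique box of `l \ μ` when `Covers μ l`. -/
def addedContent (μ l : YoungDiagram) : ℤ := ∑ c ∈ l.cells \ μ.cells, content c

/-- The removable corner cells of a Young diagram; their contents are the local
maxima `y_i` of the profile. -/
def removableCells (l : YoungDiagram) : Finset (ℕ × ℕ) :=
  l.cells.filter (fun c => (c.1, c.2 + 1) ∉ l ∧ (c.1 + 1, c.2) ∉ l)

/-- The addable cells of a Young diagram; their contents are the local minima `x_i`
of the profile. -/
def addableCells (l : YoungDiagram) : Finset (ℕ × ℕ) :=
  ((Finset.range (l.card + 1)) ×ˢ (Finset.range (l.card + 1))).filter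
    (fun c => c ∉ l ∧ (c.1 = 0 ∨ (c.1 - 1, c.2) ∈ l) ∧ (c.2 = 0 ∨ (c.1, c.2 - 1) ∈ l))

/-- The transition probability `p↑(l, ·)` at an addable content `x = x_i`:
`∏_j (x_i - y_j) / ∏_{j ≠ i} (x_i - x_j)`. -/
noncomputable def pUpAt (l : YoungDiagram) (x : ℤ) : ℝ :=
  (∏ r ∈ removableCells l, ((x : ℝ) - (content r : ℝ))) /
    (∏ a ∈ (addableCells l).filter (fun a => content a ≠ x), ((x : ℝ) - (content a : ℝ)))

/-- The cotransition probability `p↓(l, ·)` at a removable content `y = y_i`: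
`-(1/|l|) ∏_j (y_i - x_j) / ∏_{j ≠ i} (y_i - y_j)`. -/
noncomputable def pDownAt (l : YoungDiagram) (y : ℤ) : ℝ :=
  -(1 / (l.card : ℝ)) *
    ((∏ a ∈ addableCells l, ((y : ℝ) - (content a : ℝ))) /
      (∏ r ∈ (removableCells l).filter (fun r => content r ≠ y), ((y : ℝ) - (content r : ℝ))))

/-- `p↑(μ, l)` for `μ ⋖ l`. -/
noncomputable def pUp (μ l : YoungDiagram) : ℝ := pUpAt μ (addedContent μ l)

/-- `p↓(l, μ)` for `μ ⋖ l`. -/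
noncomputable def pDown (l μ : YoungDiagram) : ℝ := pDownAt l (addedContent μ l)

/-- The Plancherel harmonic function
`f_Pl(l) = (1/|l|!) ∏_{(i,j) ∈ l} (l_i + l'_j - i - j + 1)` (hook products, written with
0-based indices). -/
noncomputable def fPl (l : YoungDiagram) : ℝ :=
  (∏ c ∈ l.cells, ((l.rowLen c.1 : ℝ) + (l.colLen c.2 : ℝ) - (c.1 : ℝ) - (c.2 : ℝ) - 1)) /
    (Nat.factorial l.card : ℝ)


noncomputable section
open Polynomial

def ar (l : YoungDiagram) (i : ℕ) : ℤ := (l.rowLen i : ℤ) - i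
noncomputable def lin (x : ℤ) : Polynomial ℝ := Polynomial.X - Polynomial.C (x : ℝ)
noncomputable def AP (l : YoungDiagram) : Polynomial ℝ := ∏ c ∈ addableCells l, lin (content c)
noncomputable def RP (l : YoungDiagram) : Polynomial ℝ := ∏ c ∈ removableCells l, lin (content c)
noncomputable def EP (l : YoungDiagram) (N : ℕ) : Polynomial ℝ := ∏ i ∈ Finset.range N, lin (ar l i)
noncomputable def DP (l : YoungDiagram) (N : ℕ) : Polynomial ℝ :=
  ∏ i ∈ Finset.range (N - 1), lin (ar l i - 1)

-- basic facts
lemma rowLen_le_card (l : YoungDiagram) (i : ℕ) : l.rowLen i ≤ l.card := by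
  rw [l.rowLen_eq_card]
  exact Finset.card_le_card (fun c hc => by
    rw [YoungDiagram.mem_row_iff] at hc; exact hc.1)

lemma colLen_le_card (l : YoungDiagram) (j : ℕ) : l.colLen j ≤ l.card := by
  rw [l.colLen_eq_card]
  exact Finset.card_le_card (fun c hc => by
    rw [YoungDiagram.mem_col_iff] at hc; exact hc.1)

/-- row index of a nonempty row is < card -/
lemma lt_card_of_rowLen_pos (l : YoungDiagram) {i : ℕ} (h : 0 < l.rowLen i) :
    i < l.card := by
  have : (i, 0) ∈ l := by rw [YoungDiagram.mem_iff_lt_rowLen]; exact h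
  have h1 : i < l.colLen 0 := by rwa [← YoungDiagram.mem_iff_lt_colLen]
  exact lt_of_lt_of_le h1 (colLen_le_card l 0)

lemma mem_addable_iff {l : YoungDiagram} {c : ℕ × ℕ} :
    c ∈ addableCells l ↔ c.2 = l.rowLen c.1 ∧ (c.1 = 0 ∨ l.rowLen c.1 < l.rowLen (c.1 - 1)) := by
  obtain ⟨i, j⟩ := c
  simp only [addableCells, Finset.mem_filter, Finset.mem_product, Finset.mem_range]
  constructor
  · rintro ⟨⟨hi, hj⟩, hnm, h1, h2⟩
    have hge : l.rowLen i ≤ j := by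
      by_contra h
      exact hnm (by rw [YoungDiagram.mem_iff_lt_rowLen]; omega)
    have hle : j ≤ l.rowLen i := by
      rcases h2 with h2 | h2
      · omega
      · rw [YoungDiagram.mem_iff_lt_rowLen] at h2; omega
    have hj' : j = l.rowLen i := le_antisymm hle hge
    refine ⟨hj', ?_⟩
    rcases h1 with h1 | h1
    · exact Or.inl h1
    · rw [YoungDiagram.mem_iff_lt_rowLen] at h1; omega
  · rintro ⟨hj, h1⟩
    have hnm : (i, j) ∉ l := by rw [YoungDiagram.mem_iff_lt_rowLen]; omega
    have hile : i ≤ l.card := by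
      rcases h1 with h1 | h1
      · omega
      · have : 0 < l.rowLen (i-1) := by omega
        have := lt_card_of_rowLen_pos l this
        rcases Nat.eq_zero_or_pos i with h0 | h0
        · omega
        · omega
    have hjle : j ≤ l.card := hj ▸ rowLen_le_card l i
    refine ⟨⟨by omega, by omega⟩, hnm, ?_, ?_⟩
    · rcases h1 with h1 | h1
      · exact Or.inl h1
      · right; rw [YoungDiagram.mem_iff_lt_rowLen]; omega
    · rcases Nat.eq_zero_or_pos j with h0 | h0
      · exact Or.inl h0
      · right; rw [YoungDiagram.mem_iff_lt_rowLen]; omega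

lemma mem_removable_iff {l : YoungDiagram} {c : ℕ × ℕ} :
    c ∈ removableCells l ↔ c.2 + 1 = l.rowLen c.1 ∧ l.rowLen (c.1 + 1) < l.rowLen c.1 := by
  obtain ⟨i, j⟩ := c
  simp only [removableCells, Finset.mem_filter, YoungDiagram.mem_cells]
  rw [YoungDiagram.mem_iff_lt_rowLen, YoungDiagram.mem_iff_lt_rowLen,
    YoungDiagram.mem_iff_lt_rowLen]
  omega


lemma AP_eq (l : YoungDiagram) {N : ℕ} (hN : l.card < N) :
    AP l = ∏ i ∈ (Finset.range N).filter
      (fun i => i = 0 ∨ l.rowLen i < l.rowLen (i - 1)), lin (ar l i) := by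
  refine Finset.prod_nbij' (fun c => c.1) (fun i => (i, l.rowLen i)) ?_ ?_ ?_ ?_ ?_
  · intro c hc
    rw [mem_addable_iff] at hc
    simp only [Finset.mem_filter, Finset.mem_range]
    refine ⟨?_, hc.2⟩
    rcases hc.2 with h | h
    · omega
    · have : 0 < l.rowLen (c.1 - 1) := by omega
      have := lt_card_of_rowLen_pos l this
      omega
  · intro i hi
    simp only [Finset.mem_filter, Finset.mem_range] at hi
    rw [mem_addable_iff]
    exact ⟨rfl, hi.2⟩
  · intro c hc
    rw [mem_addable_iff] at hc
    exact Prod.ext rfl hc.1.symm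
  · intro i _; rfl
  · intro c hc
    rw [mem_addable_iff] at hc
    congr 1
    simp only [content, ar, hc.1]

lemma RP_eq (l : YoungDiagram) {N : ℕ} (hN : l.card < N) :
    RP l = ∏ i ∈ (Finset.range (N - 1)).filter
      (fun i => l.rowLen (i + 1) < l.rowLen i), lin (ar l i - 1) := by
  refine Finset.prod_nbij' (fun c => c.1) (fun i => (i, l.rowLen i - 1)) ?_ ?_ ?_ ?_ ?_
  · intro c hc
    rw [mem_removable_iff] at hc
    simp only [Finset.mem_filter, Finset.mem_range]
    refine ⟨?_, hc.2⟩
    have : 0 < l.rowLen c.1 := by omega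
    have := lt_card_of_rowLen_pos l this
    omega
  · intro i hi
    simp only [Finset.mem_filter, Finset.mem_range] at hi
    rw [mem_removable_iff]
    constructor
    · simp only; omega
    · exact hi.2
  · intro c hc
    rw [mem_removable_iff] at hc
    refine Prod.ext rfl ?_
    simp only; omega
  · intro i _; rfl
  · intro c hc
    rw [mem_removable_iff] at hc
    congr 1
    simp only [content, ar]
    omega

lemma shift_prod (l : YoungDiagram) (N : ℕ) :
    ∏ i ∈ (Finset.range (N - 1)).filter
      (fun i => ¬ l.rowLen (i + 1) < l.rowLen i), lin (ar l i - 1) =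
    ∏ i ∈ (Finset.range N).filter
      (fun i => ¬ (i = 0 ∨ l.rowLen i < l.rowLen (i - 1))), lin (ar l i) := by
  refine Finset.prod_nbij' (fun i => i + 1) (fun j => j - 1) ?_ ?_ ?_ ?_ ?_
  · intro i hi
    simp only [Finset.mem_filter, Finset.mem_range] at hi ⊢
    have := l.rowLen_anti i (i + 1) (by omega)
    constructor
    · omega
    · push_neg
      refine ⟨by omega, ?_⟩
      simp only [Nat.add_sub_cancel]
      omega
  · intro j hj
    simp only [Finset.mem_filter, Finset.mem_range] at hj ⊢
    push_neg at hj
    obtain ⟨hjN, hj0, hjle⟩ := hj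
    have := l.rowLen_anti (j - 1) j (by omega)
    constructor
    · omega
    · have hj1 : j - 1 + 1 = j := by omega
      rw [hj1]
      omega
  · intro i _; simp
  · intro j hj
    simp only [Finset.mem_filter, Finset.mem_range] at hj
    push_neg at hj
    omega
  · intro i hi
    simp only [Finset.mem_filter, Finset.mem_range] at hi
    have h1 := l.rowLen_anti i (i + 1) (by omega)
    have h2 : l.rowLen (i + 1) = l.rowLen i := by omega
    congr 1
    simp only [ar, h2]
    push_cast
    ring

lemma boundary (l : YoungDiagram) {N : ℕ} (hN : l.card < N) :
    AP l * DP l N = RP l * EP l N := by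
  rw [AP_eq l hN, RP_eq l hN, EP, DP,
    ← Finset.prod_filter_mul_prod_filter_not (Finset.range N)
      (fun i => i = 0 ∨ l.rowLen i < l.rowLen (i - 1)) (fun i => lin (ar l i)),
    ← Finset.prod_filter_mul_prod_filter_not (Finset.range (N - 1))
      (fun i => l.rowLen (i + 1) < l.rowLen i) (fun i => lin (ar l i - 1)),
    shift_prod l N]
  ring

lemma rowLen_mono {l μ : YoungDiagram} (h : l ≤ μ) (i : ℕ) : l.rowLen i ≤ μ.rowLen i := by
  rcases Nat.eq_zero_or_pos (l.rowLen i) with h0 | h0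
  · omega
  · have : (i, l.rowLen i - 1) ∈ l := by rw [YoungDiagram.mem_iff_lt_rowLen]; omega
    have : (i, l.rowLen i - 1) ∈ μ := by
      rw [← YoungDiagram.mem_cells] at this ⊢
      exact YoungDiagram.cells_subset_iff.mpr h this
    rw [YoungDiagram.mem_iff_lt_rowLen] at this
    omega

lemma covers_struct {l μ : YoungDiagram} (h : Covers l μ) :
    ∃ i₀ : ℕ, μ.cells = insert (i₀, l.rowLen i₀) l.cells ∧
      (∀ i, μ.rowLen i = if i = i₀ then l.rowLen i + 1 else l.rowLen i) ∧
      (i₀ = 0 ∨ l.rowLen i₀ < l.rowLen (i₀ - 1)) ∧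
      addedContent l μ = ar l i₀ := by
  obtain ⟨hle, hcard⟩ := h
  have hsub : l.cells ⊆ μ.cells := YoungDiagram.cells_subset_iff.mpr hle
  have hcard' : μ.cells.card = l.cells.card + 1 := hcard
  have hd : (μ.cells \ l.cells).card = 1 := by
    rw [Finset.card_sdiff_of_subset hsub]; omega
  obtain ⟨A, hA⟩ := Finset.card_eq_one.mp hd
  have hins : μ.cells = insert A l.cells := by
    ext c
    constructor
    · intro hc
      by_cases hcl : c ∈ l.cells
      · exact Finset.mem_insert_of_mem hcl
      · have : c ∈ μ.cells \ l.cells := Finset.mem_sdiff.mpr ⟨hc, hcl⟩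
        rw [hA, Finset.mem_singleton] at this
        rw [this]
        exact Finset.mem_insert_self A _
    · intro hc
      rcases Finset.mem_insert.mp hc with hc' | hc
      · have hAm : A ∈ μ.cells \ l.cells := hA ▸ Finset.mem_singleton_self A
        rw [hc']
        exact (Finset.mem_sdiff.mp hAm).1
      · exact hsub hc
  have hAnl : A ∉ l.cells := by
    have : A ∈ μ.cells \ l.cells := hA ▸ Finset.mem_singleton_self A
    exact (Finset.mem_sdiff.mp this).2
  obtain ⟨i₀, j₀⟩ := A
  have hAμ : (i₀, j₀) ∈ μ := by rw [← YoungDiagram.mem_cells, hins]; exact Finset.mem_insert_self _ _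
  have hAnl' : (i₀, j₀) ∉ l := by rwa [← YoungDiagram.mem_cells]
  -- j₀ = rowLen l i₀
  have hge : l.rowLen i₀ ≤ j₀ := by
    by_contra hcon
    exact hAnl' (YoungDiagram.mem_iff_lt_rowLen.mpr (by omega))
  have hle' : j₀ ≤ l.rowLen i₀ := by
    by_contra hcon
    have hm : (i₀, l.rowLen i₀) ∈ μ := μ.up_left_mem le_rfl (by omega) hAμ
    rw [← YoungDiagram.mem_cells, hins, Finset.mem_insert] at hm
    rcases hm with he | hm
    · have := (Prod.ext_iff.mp he).2
      simp only at this
      omega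
    · rw [YoungDiagram.mem_cells, YoungDiagram.mem_iff_lt_rowLen] at hm
      omega
  have hj₀ : j₀ = l.rowLen i₀ := le_antisymm hle' hge
  subst hj₀
  refine ⟨i₀, hins, ?_, ?_, ?_⟩
  · intro i
    by_cases hi : i = i₀
    · rw [if_pos hi, hi]
      have h1 : l.rowLen i₀ < μ.rowLen i₀ := YoungDiagram.mem_iff_lt_rowLen.mp hAμ
      have h2 : (i₀, l.rowLen i₀ + 1) ∉ μ := by
        rw [← YoungDiagram.mem_cells, hins, Finset.mem_insert]
        push_neg
        constructor
        · intro he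
          have := (Prod.ext_iff.mp he).2
          simp only at this
          omega
        · rw [YoungDiagram.mem_cells, YoungDiagram.mem_iff_lt_rowLen]
          omega
      rw [YoungDiagram.mem_iff_lt_rowLen] at h2
      omega
    · simp only [if_neg hi]
      have h1 := rowLen_mono hle i
      have h2 : (i, l.rowLen i) ∉ μ := by
        rw [← YoungDiagram.mem_cells, hins, Finset.mem_insert]
        push_neg
        constructor
        · intro he
          exact hi (Prod.ext_iff.mp he).1
        · rw [YoungDiagram.mem_cells, YoungDiagram.mem_iff_lt_rowLen]
          omega
      rw [YoungDiagram.mem_iff_lt_rowLen] at h2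
      omega
  · rcases Nat.eq_zero_or_pos i₀ with h0 | h0
    · exact Or.inl h0
    · right
      have hm : (i₀ - 1, l.rowLen i₀) ∈ μ := μ.up_left_mem (by omega) le_rfl hAμ
      rw [← YoungDiagram.mem_cells, hins, Finset.mem_insert] at hm
      rcases hm with he | hm
      · have := (Prod.ext_iff.mp he).1
        simp only at this
        omega
      · rw [YoungDiagram.mem_cells, YoungDiagram.mem_iff_lt_rowLen] at hm
        omega
  · rw [addedContent, hA, Finset.sum_singleton]
    simp [content, ar]

lemma lin_ne_zero (x : ℤ) : lin x ≠ 0 := Polynomial.X_sub_C_ne_zero _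

lemma EP_step {l μ : YoungDiagram} {i₀ N : ℕ}
    (hrow : ∀ i, μ.rowLen i = if i = i₀ then l.rowLen i + 1 else l.rowLen i) (hN : i₀ < N) :
    EP μ N * lin (ar l i₀) = EP l N * lin (ar l i₀ + 1) := by
  have h0 : i₀ ∈ Finset.range N := Finset.mem_range.mpr hN
  rw [EP, EP, ← Finset.mul_prod_erase _ _ h0, ← Finset.mul_prod_erase _ _ h0]
  have h1 : ar μ i₀ = ar l i₀ + 1 := by
    rw [ar, ar, hrow i₀, if_pos rfl]; push_cast; ring
  have h2 : ∀ i ∈ (Finset.range N).erase i₀, lin (ar μ i) = lin (ar l i) := by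
    intro i hi
    rw [ar, ar, hrow i, if_neg (Finset.mem_erase.mp hi).1]
  rw [h1, Finset.prod_congr rfl h2]
  ring

lemma DP_step {l μ : YoungDiagram} {i₀ N : ℕ}
    (hrow : ∀ i, μ.rowLen i = if i = i₀ then l.rowLen i + 1 else l.rowLen i) (hN : i₀ < N - 1) :
    DP μ N * lin (ar l i₀ - 1) = DP l N * lin (ar l i₀) := by
  have h0 : i₀ ∈ Finset.range (N - 1) := Finset.mem_range.mpr hN
  rw [DP, DP, ← Finset.mul_prod_erase _ _ h0, ← Finset.mul_prod_erase _ _ h0]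
  have h1 : ar μ i₀ - 1 = ar l i₀ := by
    rw [ar, ar, hrow i₀, if_pos rfl]; push_cast; ring
  have h2 : ∀ i ∈ (Finset.range (N - 1)).erase i₀, lin (ar μ i - 1) = lin (ar l i - 1) := by
    intro i hi
    rw [ar, ar, hrow i, if_neg (Finset.mem_erase.mp hi).1]
  rw [h1, Finset.prod_congr rfl h2]
  ring

lemma diamond {l μ : YoungDiagram} {i₀ : ℕ}
    (hcard : μ.card = l.card + 1)
    (hrow : ∀ i, μ.rowLen i = if i = i₀ then l.rowLen i + 1 else l.rowLen i) :
    AP μ * RP l * lin (ar l i₀) ^ 2 =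
      AP l * RP μ * (lin (ar l i₀ - 1) * lin (ar l i₀ + 1)) := by
  set N := l.card + 2 with hNdef
  have hi₀ : i₀ < μ.card := by
    apply lt_card_of_rowLen_pos
    rw [hrow i₀, if_pos rfl]; omega
  have h1 := boundary l (N := N) (by omega)
  have h2 := boundary μ (N := N) (by omega)
  have h3 := EP_step hrow (show i₀ < N by omega)
  have h4 := DP_step hrow (show i₀ < N - 1 by omega)
  have hne : DP μ N * EP l N ≠ 0 := by
    apply mul_ne_zero
    · exact Finset.prod_ne_zero_iff.mpr (fun i _ => lin_ne_zero _)
    · exact Finset.prod_ne_zero_iff.mpr (fun i _ => lin_ne_zero _)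
  apply mul_right_cancel₀ hne
  linear_combination (RP l * lin (ar l i₀) ^ 2 * EP l N) * h2 +
    (RP μ * RP l * lin (ar l i₀) * EP l N) * h3 -
    (RP μ * lin (ar l i₀) * EP l N * lin (ar l i₀ + 1)) * h1 -
    (RP μ * EP l N * lin (ar l i₀ + 1) * AP l) * h4

lemma ar_strict (l : YoungDiagram) {i j : ℕ} (h : i < j) : ar l j < ar l i := by
  have := l.rowLen_anti i j (le_of_lt h)
  rw [ar, ar]
  omega

lemma addable_eq_of_content_eq {l : YoungDiagram} {c d : ℕ × ℕ}
    (hc : c ∈ addableCells l) (hd : d ∈ addableCells l) (h : content c = content d) : c = d := by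
  rw [mem_addable_iff] at hc hd
  have hc' : content c = ar l c.1 := by rw [content, ar, hc.1]
  have hd' : content d = ar l d.1 := by rw [content, ar, hd.1]
  have h1 : c.1 = d.1 := by
    rcases lt_trichotomy c.1 d.1 with h' | h' | h'
    · have := ar_strict l h'; omega
    · exact h'
    · have := ar_strict l h'; omega
  exact Prod.ext h1 (by rw [hc.1, hd.1, h1])

lemma filter_eq_erase {l : YoungDiagram} {B : ℕ × ℕ} {x : ℤ}
    (hB : B ∈ addableCells l) (hx : content B = x) :
    (addableCells l).filter (fun c => content c ≠ x) = (addableCells l).erase B := by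
  ext c
  simp only [Finset.mem_filter, Finset.mem_erase]
  constructor
  · rintro ⟨hc, hcx⟩
    exact ⟨fun he => hcx (he ▸ hx), hc⟩
  · rintro ⟨hcB, hc⟩
    refine ⟨hc, fun he => hcB (addable_eq_of_content_eq hc hB (he.trans hx.symm))⟩

end
end YG

open YG Finset

/-- Corollary on ratios of transition probabilities: if `λ ⋖ μ ⋖ ν` and
`λ ⋖ ρ ⋖ ν` with `μ ≠ ρ`, then, with `r = c(ν/μ) - c(μ/λ)`, one has `r ≠ ±1` and
`r²/((r - 1)(r + 1)) · p↑(λ,ρ) = p↑(μ,ν)`. -/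
theorem stmt7 (l μ ν ρ : YoungDiagram)
    (h1 : Covers l μ) (h2 : Covers μ ν) (h3 : Covers l ρ) (h4 : Covers ρ ν)
    (hne : μ ≠ ρ) :
    addedContent μ ν - addedContent l μ ≠ 1 ∧
    addedContent μ ν - addedContent l μ ≠ -1 ∧
    ((addedContent μ ν : ℝ) - (addedContent l μ : ℝ)) ^ 2 /
        ((((addedContent μ ν : ℝ) - (addedContent l μ : ℝ)) - 1) *
          (((addedContent μ ν : ℝ) - (addedContent l μ : ℝ)) + 1)) * pUp l ρ =
      pUp μ ν := by
  classical
  obtain ⟨i₀, hinsμ, hrowμ, haddμ, hacμ⟩ := covers_struct h1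
  obtain ⟨i₁, hinsρ, hrowρ, haddρ, hacρ⟩ := covers_struct h3
  obtain ⟨i₂, hinsν, hrowν, haddν, hacν⟩ := covers_struct h2
  have hABne : ((i₀, l.rowLen i₀) : ℕ × ℕ) ≠ (i₁, l.rowLen i₁) := by
    intro hEq
    exact hne (YoungDiagram.ext (by rw [hinsμ, hinsρ, hEq]))
  have hii : i₀ ≠ i₁ := by
    intro h
    exact hABne (by rw [h])
  have hBν : ((i₁, l.rowLen i₁) : ℕ × ℕ) ∈ ν.cells :=
    YoungDiagram.cells_subset_iff.mpr h4.1 (by rw [hinsρ]; exact Finset.mem_insert_self _ _)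
  have hBl : ((i₁, l.rowLen i₁) : ℕ × ℕ) ∉ l.cells := by
    rw [YoungDiagram.mem_cells, YoungDiagram.mem_iff_lt_rowLen]
    omega
  have hBμ : ((i₁, l.rowLen i₁) : ℕ × ℕ) ∉ μ.cells := by
    rw [hinsμ, Finset.mem_insert]
    push_neg
    exact ⟨fun h => hABne h.symm, hBl⟩
  have hB2 : ((i₁, l.rowLen i₁) : ℕ × ℕ) = (i₂, μ.rowLen i₂) := by
    rw [hinsν] at hBν
    rcases Finset.mem_insert.mp hBν with h | h
    · exact h
    · exact absurd h hBμ
  have hi₂ : i₂ = i₁ := ((Prod.ext_iff.mp hB2).1).symm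
  have hμrow : μ.rowLen i₁ = l.rowLen i₁ := by
    have := (Prod.ext_iff.mp hB2).2
    simp only at this
    rw [this, hi₂]
  have hb2 : addedContent μ ν = ar l i₁ := by
    rw [hacν, hi₂, ar, ar, hμrow]
  have hr2 : ar l i₁ - ar l i₀ ≤ -2 ∨ 2 ≤ ar l i₁ - ar l i₀ := by
    rcases Nat.lt_or_ge i₀ i₁ with h | h
    · have h1 : l.rowLen i₁ < l.rowLen (i₁ - 1) := by
        rcases haddρ with h0 | h0
        · omega
        · exact h0
      have h2 : l.rowLen (i₁ - 1) ≤ l.rowLen i₀ := l.rowLen_anti _ _ (by omega)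
      left; rw [ar, ar]; omega
    · have hlt : i₁ < i₀ := by omega
      have h1 : l.rowLen i₀ < l.rowLen (i₀ - 1) := by
        rcases haddμ with h0 | h0
        · omega
        · exact h0
      have h2 : l.rowLen (i₀ - 1) ≤ l.rowLen i₁ := l.rowLen_anti _ _ (by omega)
      right; rw [ar, ar]; omega
  refine ⟨by rw [hb2, hacμ]; omega, by rw [hb2, hacμ]; omega, ?_⟩
  -- main identity
  have hcont : content ((i₁, l.rowLen i₁) : ℕ × ℕ) = ar l i₁ := by
    simp [content, ar]
  have hBaddl : ((i₁, l.rowLen i₁) : ℕ × ℕ) ∈ addableCells l :=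
    mem_addable_iff.mpr ⟨rfl, haddρ⟩
  have hBaddμ : ((i₁, l.rowLen i₁) : ℕ × ℕ) ∈ addableCells μ := by
    rw [mem_addable_iff]
    show l.rowLen i₁ = μ.rowLen i₁ ∧ (i₁ = 0 ∨ μ.rowLen i₁ < μ.rowLen (i₁ - 1))
    refine ⟨hμrow.symm, ?_⟩
    rcases haddρ with h0 | h0
    · exact Or.inl h0
    · right
      have hx := hrowμ (i₁ - 1)
      rw [hμrow]
      by_cases hc : i₁ - 1 = i₀
      · rw [if_pos hc] at hx; omega
      · rw [if_neg hc] at hx; omega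
  have hcontμ : content ((i₁, l.rowLen i₁) : ℕ × ℕ) = ar l i₁ := hcont
  have D1 := diamond h1.2 hrowμ
  have hsplitl : AP l = lin (ar l i₁) *
      ∏ c ∈ (addableCells l).erase (i₁, l.rowLen i₁), lin (content c) := by
    rw [AP, ← Finset.mul_prod_erase _ _ hBaddl, hcont]
  have hsplitμ : AP μ = lin (ar l i₁) *
      ∏ c ∈ (addableCells μ).erase (i₁, l.rowLen i₁), lin (content c) := by
    rw [AP, ← Finset.mul_prod_erase _ _ hBaddμ, hcont]
  rw [hsplitl, hsplitμ] at D1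
  have D2 : (∏ c ∈ (addableCells μ).erase (i₁, l.rowLen i₁), lin (content c)) * RP l *
        lin (ar l i₀) ^ 2 =
      (∏ c ∈ (addableCells l).erase (i₁, l.rowLen i₁), lin (content c)) * RP μ *
        (lin (ar l i₀ - 1) * lin (ar l i₀ + 1)) := by
    apply mul_left_cancel₀ (lin_ne_zero (ar l i₁))
    linear_combination D1
  have E := congrArg (Polynomial.eval ((ar l i₁ : ℤ) : ℝ)) D2
  simp only [lin, RP, Polynomial.eval_mul, Polynomial.eval_pow, Polynomial.eval_prod,
    Polynomial.eval_sub, Polynomial.eval_X, Polynomial.eval_C] at E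
  push_cast at E
  -- unfold the goal
  rw [pUp, pUp, hb2, hacρ, hacμ, pUpAt, pUpAt,
    filter_eq_erase hBaddl hcont, filter_eq_erase hBaddμ hcontμ]
  have hAlne : (∏ c ∈ (addableCells l).erase (i₁, l.rowLen i₁),
      (((ar l i₁ : ℤ) : ℝ) - (content c : ℝ))) ≠ 0 := by
    apply Finset.prod_ne_zero_iff.mpr
    intro c hc
    have hcB := (Finset.mem_erase.mp hc).1
    have hcadd := (Finset.mem_erase.mp hc).2
    have hcc : content c ≠ ar l i₁ :=
      fun h => hcB (addable_eq_of_content_eq hcadd hBaddl (h.trans hcont.symm))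
    intro h0
    exact hcc (by exact_mod_cast (sub_eq_zero.mp h0).symm)
  have hAμne : (∏ c ∈ (addableCells μ).erase (i₁, l.rowLen i₁),
      (((ar l i₁ : ℤ) : ℝ) - (content c : ℝ))) ≠ 0 := by
    apply Finset.prod_ne_zero_iff.mpr
    intro c hc
    have hcB := (Finset.mem_erase.mp hc).1
    have hcadd := (Finset.mem_erase.mp hc).2
    have hcc : content c ≠ ar l i₁ :=
      fun h => hcB (addable_eq_of_content_eq hcadd hBaddμ (h.trans hcontμ.symm))
    intro h0
    exact hcc (by exact_mod_cast (sub_eq_zero.mp h0).symm)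
  have hm1 : ((ar l i₁ : ℤ) : ℝ) - ((ar l i₀ : ℤ) : ℝ) - 1 ≠ 0 := by
    rcases hr2 with h | h
    · have : ((ar l i₁ : ℤ) : ℝ) - ((ar l i₀ : ℤ) : ℝ) ≤ -2 := by exact_mod_cast h
      intro h0; linarith
    · have : (2 : ℝ) ≤ ((ar l i₁ : ℤ) : ℝ) - ((ar l i₀ : ℤ) : ℝ) := by exact_mod_cast h
      intro h0; linarith
  have hp1 : ((ar l i₁ : ℤ) : ℝ) - ((ar l i₀ : ℤ) : ℝ) + 1 ≠ 0 := by
    rcases hr2 with h | h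
    · have : ((ar l i₁ : ℤ) : ℝ) - ((ar l i₀ : ℤ) : ℝ) ≤ -2 := by exact_mod_cast h
      intro h0; linarith
    · have : (2 : ℝ) ≤ ((ar l i₁ : ℤ) : ℝ) - ((ar l i₀ : ℤ) : ℝ) := by exact_mod_cast h
      intro h0; linarith
  field_simp
  linear_combination E
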